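/- arXiv:2504.00508 — 2 statements merged into one kernel-verified Lean document; each statement's English description precedes it below -/
import Mathlib

section
/- In the multislice Erdős–Rényi model, the sum of covariances between 3D triangle indicators and 1D triangle indicators satisfies R_{3,1} ≤ 3·C(n,3)·(n−2)·∑_{(i,j,k)} p_i^3·p_j·p_k·q^3, where the sum is over ordered triples of pairwise distinct layers; in particular R_{3,1} ≤ (1/2)·n^4·∑_{(i,j,k)} p_i^3·p_j·p_k·q^3. -/
open MeasureTheory Finset ProbabilityTheory

noncomputable def bern (p : ℝ) : Measure Bool :=
  ENNReal.ofReal p • Measure.dirac true + ENNReal.ofReal (1 - p) • Measure.dirac false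

instance (p : ℝ) : IsFiniteMeasure (bern p) := by
  constructor
  simp only [bern, Measure.add_apply, Measure.smul_apply, smul_eq_mul]
  finiteness

abbrev IntraIdx (n L : ℕ) := Fin L × Fin n × Fin n
abbrev InterIdx (n L : ℕ) := Fin n × Fin L × Fin L
abbrev EdgeIdx (n L : ℕ) := IntraIdx n L ⊕ InterIdx n L
abbrev Config (n L : ℕ) := EdgeIdx n L → Bool

/-- Bernoulli measure of each potential edge: intra-layer edges in layer `i` have
probability `p i`, inter-layer (down) edges have probability `q`. -/
noncomputable def edgeBern {n L : ℕ} (p : Fin L → ℝ) (q : ℝ) : EdgeIdx n L → Measure Bool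
  | .inl x => bern (p x.1)
  | .inr _ => bern q

instance {n L : ℕ} (p : Fin L → ℝ) (q : ℝ) (e : EdgeIdx n L) :
    IsFiniteMeasure (edgeBern p q e) := by
  cases e <;> simp only [edgeBern] <;> infer_instance

/-- The multislice Erdős–Rényi (MSER) measure: all potential edge indicators are
independent, intra-layer edges in layer `i` present with probability `p i`,
inter-layer edges with probability `q`. -/
noncomputable def mser (n L : ℕ) (p : Fin L → ℝ) (q : ℝ) : Measure (Config n L) :=
  Measure.pi (edgeBern p q)

/-- canonical intra-layer edge coordinate -/
def ip {n L : ℕ} (i : Fin L) (u v : Fin n) : IntraIdx n L :=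
  if u ≤ v then (i, u, v) else (i, v, u)

/-- canonical inter-layer (down) edge coordinate -/
def dp {n L : ℕ} (u : Fin n) (i j : Fin L) : InterIdx n L :=
  if i ≤ j then (u, i, j) else (u, j, i)

def edgeVal {n L : ℕ} (ω : Config n L) (i : Fin L) (u v : Fin n) : Bool := ω (.inl (ip i u v))
def downVal {n L : ℕ} (ω : Config n L) (u : Fin n) (i j : Fin L) : Bool := ω (.inr (dp u i j))

/-- presence of a 1D triangle on nodes `a,b,c` in layer `i` -/
def tri1 {n L : ℕ} (ω : Config n L) (i : Fin L) (a b c : Fin n) : Bool :=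
  edgeVal ω i a b && edgeVal ω i a c && edgeVal ω i b c

/-- presence of a 2D triangle: single edge `a-b` in layer `i`, edges `b-c`, `c-a` in
layer `j`, down edges at `a` and `b` between layers `i` and `j` -/
def tri2 {n L : ℕ} (ω : Config n L) (i j : Fin L) (a b c : Fin n) : Bool :=
  edgeVal ω i a b && edgeVal ω j b c && edgeVal ω j c a && downVal ω a i j && downVal ω b i j

/-- presence of a 3D triangle: edge `a-b` in layer `i`, `b-c` in layer `j`, `c-a` in
layer `k`, with the three connecting down edges -/
def tri3 {n L : ℕ} (ω : Config n L) (i j k : Fin L) (a b c : Fin n) : Bool :=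
  edgeVal ω i a b && edgeVal ω j b c && edgeVal ω k c a &&
    downVal ω b i j && downVal ω c j k && downVal ω a i k

/-- 1D triangle indices: a layer and an increasing triple of nodes -/
def Gamma1 (n L : ℕ) : Finset (Fin L × Fin n × Fin n × Fin n) :=
  Finset.univ.filter fun x => x.2.1 < x.2.2.1 ∧ x.2.2.1 < x.2.2.2

/-- 2D triangle indices `(i, j, a, b, c)`: single edge `a-b` (with `a < b`) in layer `i`,
two edges in layer `j ≠ i`, apex node `c` distinct from `a` and `b` -/
def Gamma2 (n L : ℕ) : Finset (Fin L × Fin L × Fin n × Fin n × Fin n) :=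
  Finset.univ.filter fun x =>
    x.1 ≠ x.2.1 ∧ x.2.2.1 < x.2.2.2.1 ∧ x.2.2.2.2 ≠ x.2.2.1 ∧ x.2.2.2.2 ≠ x.2.2.2.1

/-- 3D triangle indices `(i, j, k, a, b, c)`: pairwise distinct layers, `a < b < c` -/
def Gamma3 (n L : ℕ) : Finset (Fin L × Fin L × Fin L × Fin n × Fin n × Fin n) :=
  Finset.univ.filter fun x =>
    x.1 ≠ x.2.1 ∧ x.1 ≠ x.2.2.1 ∧ x.2.1 ≠ x.2.2.1 ∧
      x.2.2.2.1 < x.2.2.2.2.1 ∧ x.2.2.2.2.1 < x.2.2.2.2.2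


/-- covariance of two Bernoulli (triangle presence) indicators under `mu` -/
noncomputable def covX {n L : Nat} (mu : Measure (Config n L)) (X Y : Config n L -> Bool) : Real :=
  (MeasureTheory.integral mu fun w => (if X w then (1:Real) else 0) * (if Y w then (1:Real) else 0))
    - (MeasureTheory.integral mu fun w => if X w then (1:Real) else 0)
      * (MeasureTheory.integral mu fun w => if Y w then (1:Real) else 0)


/-!
Each triangle indicator says that a finite set of independent Bernoulli edges is fully
present, so `Cov(X_α, X_β) = π(T_α ∪ T_β) - π(T_α) π(T_β)`, where `π` multiplies edge
probabilities. This vanishes when the edge sets are disjoint. Otherwise, since the 3D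
triangle `α` has exactly one edge in each of its distinct layers `i, j, k`, the 1D triangle
`β` in layer `l` shares exactly that one edge with it, and the covariance is at most
`π(T_α ∪ T_β) = π(T_α) p_l² = p_i p_j p_k q³ p_l²`. An edge lies in at most `n - 2` one-layer
triangles, so summing over `β` gives `(n - 2)(p_i² + p_j² + p_k²) p_i p_j p_k q³`. Summing over
the `C(n,3)` node triples and symmetrising in `(i, j, k)` gives the first bound, and
`6 C(n,3) ≤ n³` the second.
-/

lemma isProbabilityMeasure_bern {p : ℝ} (h0 : 0 ≤ p) (h1 : p ≤ 1) :
    IsProbabilityMeasure (bern p) := by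
  constructor
  simp [bern, ← ENNReal.ofReal_add h0 (sub_nonneg.2 h1)]

lemma bern_real_true {p : ℝ} (h0 : 0 ≤ p) : (bern p).real {true} = p := by
  simp [bern, measureReal_def, h0]

lemma integral_prod_ite_pi {ι : Type*} [Fintype ι] [DecidableEq ι] (μ : ι → Measure Bool)
    [∀ e, IsProbabilityMeasure (μ e)] (S : Finset ι) :
    ∫ ω, ∏ e ∈ S, (if ω e then (1 : ℝ) else 0) ∂Measure.pi μ = ∏ e ∈ S, (μ e).real {true} := by
  have h := integral_fintype_prod_eq_prod (μ := μ)
    (fun e (b : Bool) => if e ∈ S then (if b then (1 : ℝ) else 0) else 1)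
  simp only [Fintype.prod_ite_mem] at h
  rw [h, ← Fintype.prod_ite_mem S]
  refine Finset.prod_congr rfl fun e _ => ?_
  split_ifs
  · simp [integral_fintype]
  · simp only [integral_const, probReal_univ, smul_eq_mul, mul_one]

def edgeProb {n L : ℕ} (p : Fin L → ℝ) (q : ℝ) : EdgeIdx n L → ℝ
  | .inl x => p x.1
  | .inr _ => q

section mser

variable {n L : ℕ} {p : Fin L → ℝ} {q : ℝ}

lemma edgeProb_nonneg (hp : ∀ i, 0 ≤ p i) (hq : 0 ≤ q) (e : EdgeIdx n L) :
    0 ≤ edgeProb p q e := by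
  cases e
  exacts [hp _, hq]

lemma integral_mser_prod_ite (hp : ∀ i, 0 ≤ p i ∧ p i ≤ 1) (hq : 0 ≤ q ∧ q ≤ 1)
    (S : Finset (EdgeIdx n L)) :
    ∫ ω, ∏ e ∈ S, (if ω e then (1 : ℝ) else 0) ∂mser n L p q = ∏ e ∈ S, edgeProb p q e := by
  have : ∀ e : EdgeIdx n L, IsProbabilityMeasure (edgeBern p q e) := by
    rintro (x | x)
    exacts [isProbabilityMeasure_bern (hp _).1 (hp _).2, isProbabilityMeasure_bern hq.1 hq.2]
  rw [mser, integral_prod_ite_pi]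
  refine Finset.prod_congr rfl fun e _ => ?_
  cases e
  exacts [bern_real_true (hp _).1, bern_real_true hq.1]

lemma covX_mser_eq (hp : ∀ i, 0 ≤ p i ∧ p i ≤ 1) (hq : 0 ≤ q ∧ q ≤ 1)
    {S T : Finset (EdgeIdx n L)} {X Y : Config n L → Bool}
    (hX : ∀ ω, X ω = true ↔ ∀ e ∈ S, ω e = true) (hY : ∀ ω, Y ω = true ↔ ∀ e ∈ T, ω e = true) :
    covX (mser n L p q) X Y =
      ∏ e ∈ S ∪ T, edgeProb p q e - (∏ e ∈ S, edgeProb p q e) * ∏ e ∈ T, edgeProb p q e := by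
  have hind : ∀ (Z : Config n L → Bool) (U : Finset (EdgeIdx n L)),
      (∀ ω, Z ω = true ↔ ∀ e ∈ U, ω e = true) →
        (fun ω => if Z ω then (1 : ℝ) else 0) = fun ω => ∏ e ∈ U, if ω e then (1 : ℝ) else 0 :=
    fun Z U hZ => funext fun ω => by rw [Finset.prod_boole]; congr 1; exact propext (hZ ω)
  have hXY : (fun ω => (if X ω then (1 : ℝ) else 0) * if Y ω then (1 : ℝ) else 0) =
      fun ω => ∏ e ∈ S ∪ T, if ω e then (1 : ℝ) else 0 :=
    funext fun ω => by
      rw [ite_zero_mul_ite_zero, mul_one, Finset.prod_boole]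
      congr 1
      rw [Finset.forall_mem_union, hX, hY]
  rw [covX, hXY, hind X S hX, hind Y T hY, integral_mser_prod_ite hp hq,
    integral_mser_prod_ite hp hq, integral_mser_prod_ite hp hq]

end mser

def tri1Edges {n L : ℕ} (l : Fin L) (a b c : Fin n) : Finset (EdgeIdx n L) :=
  {.inl (ip l a b), .inl (ip l a c), .inl (ip l b c)}

def tri3Edges {n L : ℕ} (i j k : Fin L) (a b c : Fin n) : Finset (EdgeIdx n L) :=
  {.inl (ip i a b), .inl (ip j b c), .inl (ip k c a),
    .inr (dp b i j), .inr (dp c j k), .inr (dp a i k)}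

lemma tri1_eq_true_iff {n L : ℕ} (ω : Config n L) (l : Fin L) (a b c : Fin n) :
    tri1 ω l a b c = true ↔ ∀ e ∈ tri1Edges l a b c, ω e = true := by
  simp [tri1, tri1Edges, edgeVal, and_assoc]

lemma tri3_eq_true_iff {n L : ℕ} (ω : Config n L) (i j k : Fin L) (a b c : Fin n) :
    tri3 ω i j k a b c = true ↔ ∀ e ∈ tri3Edges i j k a b c, ω e = true := by
  simp [tri3, tri3Edges, edgeVal, downVal, and_assoc]

lemma ip_of_le {n L : ℕ} (i : Fin L) {u v : Fin n} (h : u ≤ v) : ip i u v = (i, u, v) :=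
  if_pos h

lemma ip_comm {n L : ℕ} (i : Fin L) (u v : Fin n) : ip i u v = ip i v u := by
  unfold ip; split_ifs <;> first | rfl | (congr 2 <;> omega)

lemma ip_fst {n L : ℕ} (i : Fin L) (u v : Fin n) : (ip i u v).1 = i := by
  unfold ip; split_ifs <;> rfl

lemma dp_fst {n L : ℕ} (u : Fin n) (i j : Fin L) : (dp u i j).1 = u := by
  unfold dp; split_ifs <;> rfl

section triangles

variable {n L : ℕ} {p : Fin L → ℝ} {q : ℝ} {i j k : Fin L} {a b c : Fin n}

lemma prod_tri3Edges (hij : i ≠ j) (hik : i ≠ k) (hjk : j ≠ k) (hab : a < b) (hbc : b < c) :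
    ∏ e ∈ tri3Edges i j k a b c, edgeProb p q e = p i * p j * p k * q ^ 3 := by
  have hdp : ∀ {u v : Fin n} (i j k l : Fin L), u ≠ v → dp u i j ≠ dp v k l :=
    fun i j k l huv h => huv (by simpa [dp_fst] using congrArg Prod.fst h)
  rw [tri3Edges, ip_comm k c a, ip_of_le i hab.le, ip_of_le j hbc.le,
    ip_of_le k (hab.trans hbc).le]
  rw [Finset.prod_insert, Finset.prod_insert, Finset.prod_insert, Finset.prod_insert,
    Finset.prod_insert, Finset.prod_singleton]
  · simp [edgeProb]; ring
  all_goals simp [hij, hik, hjk, hab.ne, hbc.ne, hab.ne', (hab.trans hbc).ne', hdp]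

lemma mem_tri1Edges {l : Fin L} {e : EdgeIdx n L} (he : e ∈ tri1Edges l a b c) :
    ∃ x, e = .inl x ∧ x.1 = l := by
  simp only [tri1Edges, Finset.mem_insert, Finset.mem_singleton] at he
  rcases he with rfl | rfl | rfl <;> exact ⟨_, rfl, ip_fst ..⟩

lemma card_tri1Edges (l : Fin L) (hab : a < b) (hbc : b < c) :
    (tri1Edges (L := L) l a b c).card = 3 := by
  rw [tri1Edges, ip_of_le l hab.le, ip_of_le l hbc.le, ip_of_le l (hab.trans hbc).le]
  rw [Finset.card_insert_of_notMem, Finset.card_insert_of_notMem, Finset.card_singleton]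
  all_goals simp [hab.ne, hbc.ne]

lemma eq_of_mem_tri1Edges_of_mem_tri3Edges {l : Fin L} {x y z : Fin n} {e : EdgeIdx n L}
    (h1 : e ∈ tri1Edges l x y z) (h3 : e ∈ tri3Edges i j k a b c) :
    (l = i ∧ e = .inl (ip i a b)) ∨ (l = j ∧ e = .inl (ip j b c)) ∨
      (l = k ∧ e = .inl (ip k c a)) := by
  obtain ⟨w, rfl, rfl⟩ := mem_tri1Edges h1
  simp only [tri3Edges, Finset.mem_insert, Finset.mem_singleton, reduceCtorEq, or_false,
    Sum.inl.injEq] at h3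
  rcases h3 with rfl | rfl | rfl <;> simp [ip_fst]

lemma card_tri1Edges_inter_tri3Edges_le_one (l : Fin L) (a b c x y z : Fin n)
    (hij : i ≠ j) (hik : i ≠ k) (hjk : j ≠ k) :
    (tri1Edges l x y z ∩ tri3Edges i j k a b c).card ≤ 1 := by
  refine Finset.card_le_one.2 fun e he f hf => ?_
  rw [Finset.mem_inter] at he hf
  rcases eq_of_mem_tri1Edges_of_mem_tri3Edges he.1 he.2 with
    ⟨rfl, rfl⟩ | ⟨rfl, rfl⟩ | ⟨rfl, rfl⟩ <;>
  rcases eq_of_mem_tri1Edges_of_mem_tri3Edges hf.1 hf.2 with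
    ⟨h, rfl⟩ | ⟨h, rfl⟩ | ⟨h, rfl⟩ <;>
  simp_all

lemma card_filter_mem_tri1Edges_le (m : Fin L) {u v : Fin n} (huv : u < v) :
    ((Gamma1 n L).filter fun β =>
      .inl (ip m u v) ∈ tri1Edges β.1 β.2.1 β.2.2.1 β.2.2.2).card ≤ n - 2 := by
  -- a one-layer triangle through the edge `u v` is determined by its third vertex
  let triangleWith : Fin n → Fin L × Fin n × Fin n × Fin n := fun w =>
    (m, if w < u then (w, u, v) else if w < v then (u, w, v) else (u, v, w))
  calc _ ≤ (((Finset.univ.erase u).erase v).image triangleWith).card := by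
        refine Finset.card_le_card fun β hβ => ?_
        obtain ⟨l, x, y, z⟩ := β
        simp only [Gamma1, Finset.mem_filter, Finset.mem_univ, true_and] at hβ
        obtain ⟨⟨hxy, hyz⟩, hmem⟩ := hβ
        simp only [tri1Edges, ip_of_le m huv.le, ip_of_le l hxy.le, ip_of_le l hyz.le,
          ip_of_le l (hxy.trans hyz).le, Finset.mem_insert, Finset.mem_singleton,
          Sum.inl.injEq, Prod.mk.injEq] at hmem
        simp only [Finset.mem_image, Finset.mem_erase, Finset.mem_univ, and_true, triangleWith]
        rcases hmem with ⟨rfl, rfl, rfl⟩ | ⟨rfl, rfl, rfl⟩ | ⟨rfl, rfl, rfl⟩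
        · exact ⟨z, ⟨hyz.ne', (hxy.trans hyz).ne'⟩,
            by simp [not_lt.2 hyz.le, not_lt.2 (hxy.trans hyz).le]⟩
        · exact ⟨y, ⟨hyz.ne, hxy.ne'⟩, by simp [hyz, not_lt.2 hxy.le]⟩
        · exact ⟨x, ⟨(hxy.trans hyz).ne, hxy.ne⟩, by simp [hxy]⟩
    _ ≤ ((Finset.univ.erase u).erase v).card := Finset.card_image_le
    _ = n - 2 := by simp [Finset.card_erase_of_mem, huv.ne']; omega

lemma prod_tri1Edges_sdiff_tri3Edges_le {l : Fin L} {x y z : Fin n} (hl0 : 0 ≤ p l)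
    (hl1 : p l ≤ 1) (hij : i ≠ j) (hik : i ≠ k) (hjk : j ≠ k) (hxy : x < y) (hyz : y < z) :
    ∏ e ∈ tri1Edges l x y z \ tri3Edges i j k a b c, edgeProb p q e ≤ p l ^ 2 := by
  have hcard : 2 ≤ (tri1Edges l x y z \ tri3Edges i j k a b c).card := by
    have hsplit := Finset.card_sdiff_add_card_inter (tri1Edges l x y z) (tri3Edges i j k a b c)
    have hT : (tri1Edges (L := L) l x y z).card = 3 := card_tri1Edges l hxy hyz
    have hTS := card_tri1Edges_inter_tri3Edges_le_one l a b c x y z hij hik hjk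
    omega
  rw [Finset.prod_congr rfl fun e he => ?_, Finset.prod_const]
  · exact pow_le_pow_of_le_one hl0 hl1 hcard
  obtain ⟨w, rfl, hw⟩ := mem_tri1Edges (Finset.mem_sdiff.1 he).1
  simp [edgeProb, hw]

lemma covX_tri3_tri1_le (hp : ∀ i, 0 ≤ p i ∧ p i ≤ 1) (hq : 0 ≤ q ∧ q ≤ 1)
    (hij : i ≠ j) (hik : i ≠ k) (hjk : j ≠ k) (hab : a < b) (hbc : b < c)
    {l : Fin L} {x y z : Fin n} (hxy : x < y) (hyz : y < z) :
    covX (mser n L p q) (fun ω => tri3 ω i j k a b c) (fun ω => tri1 ω l x y z) ≤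
      (p i ^ 2 * (if .inl (ip i a b) ∈ tri1Edges l x y z then 1 else 0) +
        p j ^ 2 * (if .inl (ip j b c) ∈ tri1Edges l x y z then 1 else 0) +
        p k ^ 2 * (if .inl (ip k c a) ∈ tri1Edges l x y z then 1 else 0)) *
        (p i * p j * p k * q ^ 3) := by
  rw [covX_mser_eq hp hq (tri3_eq_true_iff · i j k a b c) (tri1_eq_true_iff · l x y z)]
  set S := tri3Edges (n := n) i j k a b c
  set T := tri1Edges (n := n) l x y z
  have hπ := edgeProb_nonneg (n := n) (fun i => (hp i).1) hq.1
  have hpi := (hp i).1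
  have hpj := (hp j).1
  have hpk := (hp k).1
  have hq0 := hq.1
  by_cases hd : Disjoint S T
  · rw [Finset.prod_union hd, prod_tri3Edges hij hik hjk hab hbc, sub_self]
    positivity
  obtain ⟨e, heS, heT⟩ := Finset.not_disjoint_iff.1 hd
  have hshared : p l ^ 2 ≤ p i ^ 2 * (if .inl (ip i a b) ∈ T then 1 else 0) +
      p j ^ 2 * (if .inl (ip j b c) ∈ T then 1 else 0) +
      p k ^ 2 * (if .inl (ip k c a) ∈ T then 1 else 0) := by
    rcases eq_of_mem_tri1Edges_of_mem_tri3Edges heT heS with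
      ⟨rfl, rfl⟩ | ⟨rfl, rfl⟩ | ⟨rfl, rfl⟩
    all_goals simp only [heT, if_true]; split_ifs <;> nlinarith
  calc _ ≤ ∏ e ∈ S ∪ T, edgeProb p q e :=
        sub_le_self _ (mul_nonneg (Finset.prod_nonneg fun e _ => hπ e)
          (Finset.prod_nonneg fun e _ => hπ e))
    _ = (∏ e ∈ S, edgeProb p q e) * ∏ e ∈ T \ S, edgeProb p q e := by
        rw [← Finset.union_sdiff_self_eq_union, Finset.prod_union Finset.disjoint_sdiff]
    _ ≤ (p i * p j * p k * q ^ 3) * p l ^ 2 := by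
        rw [prod_tri3Edges hij hik hjk hab hbc]
        gcongr
        exact prod_tri1Edges_sdiff_tri3Edges_le (hp l).1 (hp l).2 hij hik hjk hxy hyz
    _ ≤ _ := by rw [mul_comm]; gcongr

lemma sum_covX_tri3_tri1_le (hp : ∀ i, 0 ≤ p i ∧ p i ≤ 1) (hq : 0 ≤ q ∧ q ≤ 1)
    (hij : i ≠ j) (hik : i ≠ k) (hjk : j ≠ k) (hab : a < b) (hbc : b < c) :
    ∑ β ∈ Gamma1 n L, covX (mser n L p q) (fun ω => tri3 ω i j k a b c)
        (fun ω => tri1 ω β.1 β.2.1 β.2.2.1 β.2.2.2) ≤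
      ((n - 2 : ℕ) : ℝ) * ((p i ^ 2 + p j ^ 2 + p k ^ 2) * (p i * p j * p k * q ^ 3)) := by
  have hcount : ∀ (m : Fin L) {u v : Fin n}, u < v →
      ∑ β ∈ Gamma1 n L, (if .inl (ip m u v) ∈ tri1Edges β.1 β.2.1 β.2.2.1 β.2.2.2 then
        (1 : ℝ) else 0) ≤ ((n - 2 : ℕ) : ℝ) := fun m u v huv => by
    rw [Finset.sum_boole]
    exact_mod_cast card_filter_mem_tri1Edges_le m huv
  have hpi := (hp i).1
  have hpj := (hp j).1
  have hpk := (hp k).1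
  have hq0 := hq.1
  calc _ ≤ ∑ β ∈ Gamma1 n L,
        (p i ^ 2 * (if .inl (ip i a b) ∈ tri1Edges β.1 β.2.1 β.2.2.1 β.2.2.2 then 1 else 0) +
          p j ^ 2 * (if .inl (ip j b c) ∈ tri1Edges β.1 β.2.1 β.2.2.1 β.2.2.2 then 1 else 0) +
          p k ^ 2 * (if .inl (ip k c a) ∈ tri1Edges β.1 β.2.1 β.2.2.1 β.2.2.2 then 1 else 0)) *
          (p i * p j * p k * q ^ 3) := by
        refine Finset.sum_le_sum fun β hβ => ?_
        simp only [Gamma1, Finset.mem_filter] at hβ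
        exact covX_tri3_tri1_le hp hq hij hik hjk hab hbc hβ.2.1 hβ.2.2
    _ ≤ (p i ^ 2 * ((n - 2 : ℕ) : ℝ) + p j ^ 2 * ((n - 2 : ℕ) : ℝ) +
          p k ^ 2 * ((n - 2 : ℕ) : ℝ)) * (p i * p j * p k * q ^ 3) := by
        simp only [← Finset.sum_mul, Finset.sum_add_distrib, ← Finset.mul_sum]
        rw [ip_comm k c a]
        gcongr
        exacts [hcount i hab, hcount j hbc, hcount k (hab.trans hbc)]
    _ = _ := by ring

end triangles

def distinctTriples (L : ℕ) : Finset (Fin L × Fin L × Fin L) :=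
  Finset.univ.filter fun t => t.1 ≠ t.2.1 ∧ t.1 ≠ t.2.2 ∧ t.2.1 ≠ t.2.2

lemma sum_distinctTriples {L : ℕ} (f : Fin L → Fin L → Fin L → ℝ) :
    ∑ t ∈ distinctTriples L, f t.1 t.2.1 t.2.2 =
      ∑ i, ∑ j ∈ Finset.univ.erase i, ∑ k ∈ (Finset.univ.erase i).erase j, f i j k := by
  rw [distinctTriples, Finset.sum_filter, Fintype.sum_prod_type]
  refine Finset.sum_congr rfl fun i _ => ?_
  rw [Fintype.sum_prod_type]
  simp only [← Finset.filter_ne', Finset.sum_filter, ite_and, ne_comm (a := i)]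
  refine Finset.sum_congr rfl fun j _ => ?_
  split_ifs <;> simp [ne_comm]

lemma sum_distinctTriples_sq_add_sq_add_sq {L : ℕ} (p : Fin L → ℝ) (q : ℝ) :
    ∑ t ∈ distinctTriples L,
        (p t.1 ^ 2 + p t.2.1 ^ 2 + p t.2.2 ^ 2) * (p t.1 * p t.2.1 * p t.2.2 * q ^ 3) =
      3 * ∑ t ∈ distinctTriples L, p t.1 ^ 3 * p t.2.1 * p t.2.2 * q ^ 3 := by
  set g : Fin L × Fin L × Fin L → ℝ := fun t => p t.1 ^ 3 * p t.2.1 * p t.2.2 * q ^ 3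
  have hswap12 :
      ∑ t ∈ distinctTriples L, g (t.2.1, t.1, t.2.2) = ∑ t ∈ distinctTriples L, g t :=
    Finset.sum_equiv (Function.Involutive.toPerm _ fun _ => rfl)
      (by simp [distinctTriples]; tauto) fun _ _ => rfl
  have hswap13 :
      ∑ t ∈ distinctTriples L, g (t.2.2, t.2.1, t.1) = ∑ t ∈ distinctTriples L, g t :=
    Finset.sum_equiv (Function.Involutive.toPerm _ fun _ => rfl)
      (by simp [distinctTriples]; tauto) fun _ _ => rfl
  calc _ = ∑ t ∈ distinctTriples L, g t + ∑ t ∈ distinctTriples L, g (t.2.1, t.1, t.2.2) +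
        ∑ t ∈ distinctTriples L, g (t.2.2, t.2.1, t.1) := by
        rw [← Finset.sum_add_distrib, ← Finset.sum_add_distrib]
        exact Finset.sum_congr rfl fun t _ => by simp only [g]; ring
    _ = _ := by rw [hswap12, hswap13]; ring

def increasingTriples (n : ℕ) : Finset (Fin n × Fin n × Fin n) :=
  Finset.univ.filter fun s => s.1 < s.2.1 ∧ s.2.1 < s.2.2

lemma card_increasingTriples_le (n : ℕ) : (increasingTriples n).card ≤ n.choose 3 := by
  calc (increasingTriples n).card
      ≤ (Finset.univ.powersetCard 3 : Finset (Finset (Fin n))).card := by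
        refine Finset.card_le_card_of_injOn (fun s => {s.1, s.2.1, s.2.2}) ?_ ?_
        · rintro ⟨a, b, c⟩ h
          simp only [increasingTriples, Finset.coe_filter, Set.mem_ofPred_eq, Finset.mem_univ,
            true_and] at h
          simp [Finset.mem_powersetCard, Finset.card_insert_of_notMem, h.1.ne, h.2.ne,
            (h.1.trans h.2).ne]
        · rintro ⟨a, b, c⟩ h ⟨x, y, z⟩ h' heq
          simp only [increasingTriples, Finset.coe_filter, Set.mem_ofPred_eq, Finset.mem_univ,
            true_and] at h h'
          simp only [Finset.ext_iff, Finset.mem_insert, Finset.mem_singleton] at heq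
          have ha := (heq a).1 (Or.inl rfl); have hb := (heq b).1 (Or.inr (Or.inl rfl))
          have hc := (heq c).1 (Or.inr (Or.inr rfl)); have hx := (heq x).2 (Or.inl rfl)
          have hy := (heq y).2 (Or.inr (Or.inl rfl)); have hz := (heq z).2 (Or.inr (Or.inr rfl))
          simp only [Prod.mk.injEq]
          fin_omega
    _ = n.choose 3 := by simp

lemma sum_Gamma3 {n L : ℕ} (f : Fin L × Fin L × Fin L → ℝ) :
    ∑ α ∈ Gamma3 n L, f (α.1, α.2.1, α.2.2.1) =
      (increasingTriples n).card * ∑ t ∈ distinctTriples L, f t := by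
  calc _ = ∑ x ∈ distinctTriples L ×ˢ increasingTriples n, f x.1 := by
        refine Finset.sum_nbij' (fun α => ((α.1, α.2.1, α.2.2.1), α.2.2.2))
          (fun x => (x.1.1, x.1.2.1, x.1.2.2, x.2)) ?_ ?_ (fun _ _ => rfl) (fun _ _ => rfl)
          (fun _ _ => rfl)
        all_goals
          intro _ h
          simp only [Gamma3, distinctTriples, increasingTriples, Finset.mem_filter,
            Finset.mem_product, Finset.mem_univ, true_and] at h ⊢
          tauto
    _ = _ := by simp [Finset.sum_product, Finset.sum_mul, mul_comm]

lemma three_mul_choose_three_mul_sub_two_le (n : ℕ) :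
    3 * (n.choose 3 : ℝ) * ((n : ℝ) - 2) ≤ 1 / 2 * (n : ℝ) ^ 4 := by
  rcases lt_or_ge n 2 with hn | hn
  · rw [Nat.choose_eq_zero_of_lt (by omega)]
    simp only [Nat.cast_zero, mul_zero, zero_mul]
    positivity
  have hchoose : 6 * n.choose 3 ≤ n ^ 3 := by
    rw [show 6 = Nat.factorial 3 from rfl, ← Nat.descFactorial_eq_factorial_mul_choose]
    exact Nat.descFactorial_le_pow n 3
  have hchoose' : 6 * (n.choose 3 : ℝ) ≤ (n : ℝ) ^ 3 := by exact_mod_cast hchoose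
  have hn' : (2 : ℝ) ≤ n := by exact_mod_cast hn
  nlinarith [mul_le_mul_of_nonneg_right hchoose' (sub_nonneg.2 hn')]

lemma choose_three_mul_cast_sub_two (n : ℕ) :
    (n.choose 3 : ℝ) * ((n - 2 : ℕ) : ℝ) = n.choose 3 * ((n : ℝ) - 2) := by
  rcases lt_or_ge n 2 with hn | hn
  · simp [Nat.choose_eq_zero_of_lt (show n < 3 by omega)]
  · rw [Nat.cast_sub hn, Nat.cast_ofNat]

theorem R31_bound (n L : ℕ) (p : Fin L → ℝ) (q : ℝ)
    (hp : ∀ i, 0 ≤ p i ∧ p i ≤ 1) (hq : 0 ≤ q ∧ q ≤ 1) :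
    (∑ α ∈ Gamma3 n L, ∑ β ∈ Gamma1 n L,
        covX (mser n L p q)
          (fun ω => tri3 ω α.1 α.2.1 α.2.2.1 α.2.2.2.1 α.2.2.2.2.1 α.2.2.2.2.2)
          (fun ω => tri1 ω β.1 β.2.1 β.2.2.1 β.2.2.2))
        ≤ 3 * (Nat.choose n 3 : ℝ) * ((n : ℝ) - 2) *
            ∑ i, ∑ j ∈ Finset.univ.erase i, ∑ k ∈ (Finset.univ.erase i).erase j,
              p i ^ 3 * p j * p k * q ^ 3
    ∧ (∑ α ∈ Gamma3 n L, ∑ β ∈ Gamma1 n L,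
        covX (mser n L p q)
          (fun ω => tri3 ω α.1 α.2.1 α.2.2.1 α.2.2.2.1 α.2.2.2.2.1 α.2.2.2.2.2)
          (fun ω => tri1 ω β.1 β.2.1 β.2.2.1 β.2.2.2))
        ≤ 1 / 2 * (n : ℝ) ^ 4 *
            ∑ i, ∑ j ∈ Finset.univ.erase i, ∑ k ∈ (Finset.univ.erase i).erase j,
              p i ^ 3 * p j * p k * q ^ 3 := by
  set S := ∑ i, ∑ j ∈ Finset.univ.erase i, ∑ k ∈ (Finset.univ.erase i).erase j,
    p i ^ 3 * p j * p k * q ^ 3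
  have hS : 0 ≤ S :=
    Finset.sum_nonneg fun i _ => Finset.sum_nonneg fun j _ => Finset.sum_nonneg fun k _ =>
      mul_nonneg (mul_nonneg (mul_nonneg (pow_nonneg (hp i).1 3) (hp j).1) (hp k).1)
        (pow_nonneg hq.1 3)
  refine (fun h => ⟨h, h.trans (mul_le_mul_of_nonneg_right
    (three_mul_choose_three_mul_sub_two_le n) hS)⟩) ?_
  calc _ ≤ ∑ α ∈ Gamma3 n L, ((n - 2 : ℕ) : ℝ) *
          ((p α.1 ^ 2 + p α.2.1 ^ 2 + p α.2.2.1 ^ 2) * (p α.1 * p α.2.1 * p α.2.2.1 * q ^ 3)) := by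
        refine Finset.sum_le_sum fun α hα => ?_
        simp only [Gamma3, Finset.mem_filter] at hα
        obtain ⟨-, hij, hik, hjk, hab, hbc⟩ := hα
        exact sum_covX_tri3_tri1_le hp hq hij hik hjk hab hbc
    _ = (increasingTriples n).card * (((n - 2 : ℕ) : ℝ) * (3 * S)) := by
        rw [sum_Gamma3 fun t => ((n - 2 : ℕ) : ℝ) * ((p t.1 ^ 2 + p t.2.1 ^ 2 + p t.2.2 ^ 2) *
          (p t.1 * p t.2.1 * p t.2.2 * q ^ 3)), ← Finset.mul_sum,
          sum_distinctTriples_sq_add_sq_add_sq,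
          sum_distinctTriples fun i j k => p i ^ 3 * p j * p k * q ^ 3]
    _ ≤ n.choose 3 * (((n - 2 : ℕ) : ℝ) * (3 * S)) := by
        gcongr
        exact_mod_cast card_increasingTriples_le n
    _ = _ := by rw [← mul_assoc, choose_three_mul_cast_sub_two]; ring
end

section
/- Let W be a random variable taking values in the nonnegative integers and λ > 0. Then W has Poisson(λ) distribution if and only if E[λ·f(W+1) − W·f(W)] = 0 for all bounded functions f : ℕ → ℝ. -/
open MeasureTheory Finset ProbabilityTheory

/-!
For `W ~ Po(r)` the identity `(k + 1) Po(r){k + 1} = r Po(r){k}` turns `E[W f(W)]` into a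
shift of `E[r f(W + 1)]`, so the two expectations cancel. Conversely, testing the identity
against the indicator of `{m + 1}` gives `r P(W = m) = (m + 1) P(W = m + 1)`; this recursion
forces `P(W = k) = P(W = 0) r^k / k!`, and normalisation leaves only `Po(r)`.
-/

open Real
open scoped NNReal Nat

lemma tsum_sub_eq_zero_of_succ_eq {G : Type*} [AddCommGroup G] [TopologicalSpace G]
    [IsTopologicalAddGroup G] [T2Space G] {a b : ℕ → G} (hb : Summable b) (h0 : a 0 = 0)
    (hsucc : ∀ k, a (k + 1) = b k) : ∑' k, (b k - a k) = 0 := by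
  have ha : Summable a := (summable_nat_add_iff 1).mp (by simpa only [hsucc] using hb)
  rw [hb.tsum_sub ha, ha.tsum_eq_zero_add, h0, zero_add, sub_eq_zero]
  exact tsum_congr fun k => (hsucc k).symm

lemma eq_pow_div_factorial_of_mul_eq_succ_mul {K : Type*} [Field K] [CharZero K] {p : ℕ → K}
    {r : K} (h : ∀ m, r * p m = (m + 1) * p (m + 1)) (k : ℕ) : p k = p 0 * r ^ k / k ! := by
  induction k with
  | zero => simp
  | succ k ih =>
    have hk : (k + 1 : K) ≠ 0 := by exact_mod_cast k.succ_ne_zero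
    have hfact : (k ! : K) ≠ 0 := by exact_mod_cast k.factorial_ne_zero
    have hstep : p (k + 1) = r * p k / (k + 1) := by rw [h k]; field_simp
    rw [hstep, ih, Nat.factorial_succ, Nat.cast_mul, Nat.cast_succ]
    field_simp
    ring

namespace ProbabilityTheory

lemma succ_mul_poissonMeasure_real_singleton_succ (r : ℝ≥0) (k : ℕ) :
    (k + 1) * (poissonMeasure r).real {k + 1} = r * (poissonMeasure r).real {k} := by
  simp only [poissonMeasure_real_singleton, Nat.factorial_succ, Nat.cast_mul, Nat.cast_succ,
    pow_succ]
  field_simp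

lemma summable_poissonMeasure_real_singleton (r : ℝ≥0) :
    Summable fun k => (poissonMeasure r).real {k} := by
  simpa only [poissonMeasure_real_singleton] using (hasSum_one_poissonMeasure r).summable

lemma integral_stein_poissonMeasure (r : ℝ≥0) {f : ℕ → ℝ} {C : ℝ} (hf : ∀ k, |f k| ≤ C) :
    ∫ k, (r * f (k + 1) - k * f k) ∂poissonMeasure r = 0 := by
  rw [integral_poissonMeasure]
  simp only [← poissonMeasure_real_singleton, smul_eq_mul, mul_sub]
  refine tsum_sub_eq_zero_of_succ_eq ?_ (by simp) fun k => ?_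
  · refine ((summable_poissonMeasure_real_singleton r).mul_right (r * C)).of_norm_bounded
      fun k => ?_
    rw [norm_mul, norm_mul, Real.norm_of_nonneg measureReal_nonneg, NNReal.norm_eq]
    gcongr
    exact hf _
  · rw [← mul_assoc, mul_comm _ ((k + 1 : ℕ) : ℝ), Nat.cast_succ,
      succ_mul_poissonMeasure_real_singleton_succ]
    ring

lemma integral_stein_indicator_singleton (ν : Measure ℕ) [IsFiniteMeasure ν] (r : ℝ) (m : ℕ) :
    ∫ k, (r * ({m + 1} : Set ℕ).indicator 1 (k + 1) - k * ({m + 1} : Set ℕ).indicator 1 k) ∂ν =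
      r * ν.real {m} - (m + 1) * ν.real {m + 1} := by
  have hfun : (fun k : ℕ => r * ({m + 1} : Set ℕ).indicator 1 (k + 1) -
      k * ({m + 1} : Set ℕ).indicator 1 k) = fun k =>
      ({m} : Set ℕ).indicator (fun _ => r) k -
        ({m + 1} : Set ℕ).indicator (fun _ => (m + 1 : ℝ)) k := by
    ext k
    by_cases hk : k = m <;> by_cases hk' : k = m + 1 <;> simp [hk, hk']
  rw [hfun, integral_sub ((integrable_const _).indicator (measurableSet_singleton _))
      ((integrable_const _).indicator (measurableSet_singleton _)),
    integral_indicator_const _ (measurableSet_singleton _),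
    integral_indicator_const _ (measurableSet_singleton _), smul_eq_mul, smul_eq_mul,
    mul_comm r, mul_comm (m + 1 : ℝ)]

lemma eq_poissonMeasure_of_mul_real_singleton_eq (ν : Measure ℕ) [IsProbabilityMeasure ν]
    (r : ℝ≥0) (h : ∀ m, r * ν.real {m} = (m + 1) * ν.real {m + 1}) : ν = poissonMeasure r := by
  have hscale : ∀ k, ν.real {k} = ν.real {0} * exp r * (poissonMeasure r).real {k} := fun k => by
    rw [eq_pow_div_factorial_of_mul_eq_succ_mul h k, poissonMeasure_real_singleton, exp_neg]
    field_simp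
  have hc : 0 ≤ ν.real {0} * exp r := mul_nonneg measureReal_nonneg (exp_pos _).le
  have hν : ν = (ν.real {0} * exp r).toNNReal • poissonMeasure r :=
    Measure.ext_of_measureReal_singleton fun k => by
      rw [measureReal_nnreal_smul_apply, Real.coe_toNNReal _ hc, hscale]
  have hc1 : ν.real {0} * exp r = 1 := by
    have hmass := congrArg (fun ρ : Measure ℕ => ρ.real Set.univ) hν
    rwa [measureReal_nnreal_smul_apply, probReal_univ, probReal_univ, mul_one,
      Real.coe_toNNReal _ hc, eq_comm] at hmass
  rwa [hc1, Real.toNNReal_one, one_smul] at hν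

end ProbabilityTheory

theorem poisson_stein_characterization_general {Ω : Type*} [MeasurableSpace Ω] (μ : Measure Ω)
    [IsProbabilityMeasure μ] (W : Ω → ℕ) (hW : Measurable W) (r : NNReal) :
    μ.map W = ProbabilityTheory.poissonMeasure r ↔
      ∀ f : ℕ → ℝ, (∃ C, ∀ k, |f k| ≤ C) →
        ∫ ω, ((r : ℝ) * f (W ω + 1) - (W ω : ℝ) * f (W ω)) ∂μ = 0 := by
  have hmap : ∀ f : ℕ → ℝ, ∫ ω, ((r : ℝ) * f (W ω + 1) - (W ω : ℝ) * f (W ω)) ∂μ =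
      ∫ k, ((r : ℝ) * f (k + 1) - k * f k) ∂μ.map W := fun f =>
    (integral_map (f := fun k : ℕ => (r : ℝ) * f (k + 1) - k * f k) hW.aemeasurable
      measurable_from_nat.aestronglyMeasurable).symm
  simp only [hmap]
  constructor
  · rintro hPo f ⟨C, hC⟩
    rw [hPo]
    exact integral_stein_poissonMeasure r hC
  · intro hStein
    have : IsProbabilityMeasure (μ.map W) := Measure.isProbabilityMeasure_map hW.aemeasurable
    refine eq_poissonMeasure_of_mul_real_singleton_eq _ r fun m => ?_
    have hbdd : ∀ k, |({m + 1} : Set ℕ).indicator (1 : ℕ → ℝ) k| ≤ 1 := fun k => by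
      by_cases hk : k = m + 1 <;> simp [hk]
    have hm := hStein _ ⟨1, hbdd⟩
    rw [integral_stein_indicator_singleton] at hm
    linarith

theorem poisson_stein_characterization {Ω : Type*} [MeasurableSpace Ω] (μ : Measure Ω)
    [IsProbabilityMeasure μ] (W : Ω → ℕ) (hW : Measurable W) (r : NNReal) (hr : 0 < r) :
    μ.map W = ProbabilityTheory.poissonMeasure r ↔
      ∀ f : ℕ → ℝ, (∃ C, ∀ k, |f k| ≤ C) →
        ∫ ω, ((r : ℝ) * f (W ω + 1) - (W ω : ℝ) * f (W ω)) ∂μ = 0 :=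
  poisson_stein_characterization_general μ W hW r
end
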